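/- Let p be a prime, let F be a saturated fusion system over a finite p-group S, and let T ⊴ S be strongly closed in F. Suppose E ⊴ F is a normal subsystem over T and F₀ ⊴ F is a normal subsystem of p-power index over a subgroup U with U ≥ T·hyp(F). Then E ≤ F₀. -/

import Mathlib

open Subgroup

variable {S : Type*} [Group S]

/-- The conjugation homomorphism `x ↦ g x g⁻¹` between subgroups. -/
def conjHom {P Q : Subgroup S} (g : S) (h : ∀ x ∈ P, g * x * g⁻¹ ∈ Q) : ↥P →* ↥Q where
  toFun x := ⟨g * x * g⁻¹, h x x.2⟩
  map_one' := by ext; simp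
  map_mul' x y := by ext; push_cast; group

/-- Restriction/corestriction of a homomorphism between subgroups. -/
def homRestrict {P P' Q Q' : Subgroup S} (φ : ↥P →* ↥Q) (hP : P' ≤ P) (hQ : Q ≤ Q') :
    ↥P' →* ↥Q' := (Subgroup.inclusion hQ).comp (φ.comp (Subgroup.inclusion hP))

theorem homRestrict_coe {P P' Q Q' : Subgroup S} (φ : ↥P →* ↥Q) (hP : P' ≤ P) (hQ : Q ≤ Q')
    (x : ↥P') : (homRestrict φ hP hQ x : S) = (φ ⟨(x : S), hP x.2⟩ : S) := rfl

theorem hom_congr_val {P Q : Subgroup S} (φ : ↥P →* ↥Q) {a b : S} (h : a = b)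
    (ha : a ∈ P) (hb : b ∈ P) : φ ⟨a, ha⟩ = φ ⟨b, hb⟩ := by subst h; rfl

/-- A fusion system on (a subgroup of) the finite `p`-group `S`.  The field `base` is the
`p`-group over which the fusion system lives; objects are the subgroups of `base` and
morphisms are injective group homomorphisms, including all the homomorphisms induced by
conjugation in `base`, closed under composition, "divisibility" (restriction to the image)
and inverses of isomorphisms. -/
structure FusionSystem (S : Type*) [Group S] where
  base : Subgroup S
  Hom : ∀ P Q : Subgroup S, Set (↥P →* ↥Q)
  mem_le : ∀ {P Q : Subgroup S} {f : ↥P →* ↥Q}, f ∈ Hom P Q → P ≤ base ∧ Q ≤ base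
  inj : ∀ {P Q : Subgroup S} {f : ↥P →* ↥Q}, f ∈ Hom P Q → Function.Injective f
  conj_mem : ∀ {P Q : Subgroup S} (g : S), g ∈ base → P ≤ base → Q ≤ base →
    ∀ f : ↥P →* ↥Q, (∀ x : ↥P, (f x : S) = g * x * g⁻¹) → f ∈ Hom P Q
  comp_mem : ∀ {P Q R : Subgroup S} {f : ↥P →* ↥Q} {g : ↥Q →* ↥R},
    f ∈ Hom P Q → g ∈ Hom Q R → g.comp f ∈ Hom P R
  corestrict_mem : ∀ {P Q R : Subgroup S} {f : ↥P →* ↥Q}, f ∈ Hom P Q →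
    ∀ g : ↥P →* ↥R, (∀ x : ↥P, (g x : S) = (f x : S)) → Function.Surjective g → g ∈ Hom P R
  inv_mem : ∀ {P Q : Subgroup S} {f : ↥P →* ↥Q}, f ∈ Hom P Q →
    ∀ g : ↥Q →* ↥P, (∀ x, g (f x) = x) → (∀ y, f (g y) = y) → g ∈ Hom Q P

namespace FusionSystem

theorem homRestrict_mem (F : FusionSystem S) {P P' Q Q' : Subgroup S}
    {φ : ↥P →* ↥Q} (hφ : φ ∈ F.Hom P Q) (hP : P' ≤ P) (hQ : Q ≤ Q') (hQ' : Q' ≤ F.base) :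
    homRestrict φ hP hQ ∈ F.Hom P' Q' := by
  have h1 : Subgroup.inclusion hP ∈ F.Hom P' P :=
    F.conj_mem 1 (one_mem _) (hP.trans (F.mem_le hφ).1) (F.mem_le hφ).1 _
      (fun x => by simp)
  have h2 : Subgroup.inclusion hQ ∈ F.Hom Q Q' :=
    F.conj_mem 1 (one_mem _) (F.mem_le hφ).2 hQ' _ (fun x => by simp)
  exact F.comp_mem (F.comp_mem h1 hφ) h2

/-- The group `Aut_F(P)` of `F`-automorphisms of `P` (as a subgroup of `MulAut P`). -/
def AutF (F : FusionSystem S) (P : Subgroup S) : Subgroup (MulAut ↥P) where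
  carrier := {α | α.toMonoidHom ∈ F.Hom P P} ∪ {1}
  one_mem' := Or.inr rfl
  mul_mem' := by
    rintro α β (hα | hα) (hβ | hβ)
    · exact Or.inl (F.comp_mem hβ hα)
    · rw [Set.mem_singleton_iff] at hβ; subst hβ; rw [mul_one]; exact Or.inl hα
    · rw [Set.mem_singleton_iff] at hα; subst hα; rw [one_mul]; exact Or.inl hβ
    · rw [Set.mem_singleton_iff] at hα hβ; subst hα; subst hβ
      rw [mul_one]; exact Or.inr rfl
  inv_mem' := by
    rintro α (hα | hα)
    · exact Or.inl (F.inv_mem hα _ (fun x => by simp) (fun y => by simp))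
    · rw [Set.mem_singleton_iff] at hα; subst hα; rw [inv_one]; exact Or.inr rfl

end FusionSystem

/-- The subgroup of `MulAut P` of automorphisms induced by conjugation by elements of `U`. -/
def AutConj (U P : Subgroup S) : Subgroup (MulAut ↥P) where
  carrier := {α | ∃ g ∈ U, ∀ x : ↥P, (α x : S) = g * x * g⁻¹}
  one_mem' := ⟨1, one_mem U, fun x => by simp⟩
  mul_mem' := by
    rintro α β ⟨g, hg, hα⟩ ⟨h, hh, hβ⟩
    refine ⟨g * h, mul_mem hg hh, fun x => ?_⟩
    have h1 : ((α * β) x : S) = (α (β x) : S) := rfl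
    rw [h1, hα, hβ]; group
  inv_mem' := by
    rintro α ⟨g, hg, hα⟩
    refine ⟨g⁻¹, inv_mem hg, fun x => ?_⟩
    have h1 := hα (α⁻¹ x)
    rw [MulAut.apply_inv_self] at h1
    rw [inv_inv]
    rw [h1]; group

/-- Inner automorphisms of a subgroup `P`, as a subgroup of `MulAut P`. -/
abbrev InnAut (P : Subgroup S) : Subgroup (MulAut ↥P) := AutConj P P

instance innAut_normal (P : Subgroup S) : (InnAut P).Normal := by
  constructor
  rintro α ⟨g, hg, hα⟩ β
  refine ⟨(β ⟨g, hg⟩ : ↥P), (β ⟨g, hg⟩).2, fun x => ?_⟩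
  have h1 : ((β * α * β⁻¹) x : S) = (β (α (β⁻¹ x)) : S) := rfl
  have h2 : α (β⁻¹ x) = ⟨g, hg⟩ * β⁻¹ x * ⟨g, hg⟩⁻¹ := by
    ext; rw [hα]; rfl
  rw [h1, h2]
  simp [mul_assoc]

/-- `Out(P) = Aut(P)/Inn(P)`. -/
abbrev OutQuot (P : Subgroup S) := MulAut ↥P ⧸ InnAut P

/-- `Out_F(P) = Aut_F(P)/Inn(P)` as a subgroup of `Out(P)`. -/
def FusionSystem.OutF (F : FusionSystem S) (P : Subgroup S) : Subgroup (OutQuot P) :=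
  (F.AutF P).map (QuotientGroup.mk' (InnAut P))

/-- `Out_U(P)`, the image of `Aut_U(P)` in `Out(P)`. -/
def OutConj (U P : Subgroup S) : Subgroup (OutQuot P) :=
  (AutConj U P).map (QuotientGroup.mk' (InnAut P))
/-- `O^p(G)`: the smallest normal subgroup of `p`-power index. -/
def pResidual (p : ℕ) (G : Type*) [Group G] : Subgroup G :=
  ⨅ N ∈ {N : Subgroup G | N.Normal ∧ ∃ n : ℕ, N.index = p ^ n}, N

/-- `O^{p'}(G)`: the smallest normal subgroup of index prime to `p`. -/
def pPrimeResidual (p : ℕ) (G : Type*) [Group G] : Subgroup G :=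
  ⨅ N ∈ {N : Subgroup G | N.Normal ∧ Nat.Coprime N.index p}, N

/-- `O_p(G)`: the largest normal `p`-subgroup. -/
def pCoreSub (p : ℕ) (G : Type*) [Group G] : Subgroup G :=
  ⨆ N ∈ {N : Subgroup G | N.Normal ∧ IsPGroup p ↥N}, N

/-- `O^p(H)` of a subgroup `H ≤ G`, viewed again as a subgroup of `G`. -/
def subResidual (p : ℕ) {G : Type*} [Group G] (H : Subgroup G) : Subgroup G :=
  (pResidual p ↥H).map H.subtype

/-- `O^{p'}(H)` of a subgroup `H ≤ G`, viewed again as a subgroup of `G`. -/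
def subPrimeResidual (p : ℕ) {G : Type*} [Group G] (H : Subgroup G) : Subgroup G :=
  (pPrimeResidual p ↥H).map H.subtype

/-- `O_p(H)` of a subgroup `H ≤ G`, viewed again as a subgroup of `G`. -/
def subPCore (p : ℕ) {G : Type*} [Group G] (H : Subgroup G) : Subgroup G :=
  (pCoreSub p ↥H).map H.subtype

/-- `H` is a Sylow `p`-subgroup of the subgroup `K`. -/
def IsSylowIn (p : ℕ) {G : Type*} [Group G] (H K : Subgroup G) : Prop :=
  H ≤ K ∧ IsPGroup p ↥H ∧ ¬ (p ∣ H.relIndex K)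

/-- `K/H` (for `H ⊴ K`) is `p`-solvable: there is a chain of subgroups from `H` to `K`,
each normal in the next, whose successive quotients are `p`-groups or `p'`-groups. -/
def IsPSolvableQuot (p : ℕ) {G : Type*} [Group G] (H K : Subgroup G) : Prop :=
  ∃ (n : ℕ) (c : Fin (n + 1) → Subgroup G), c 0 = H ∧ c (Fin.last n) = K ∧
    ∀ i : Fin n, c i.castSucc ≤ c i.succ ∧
      (∀ g ∈ c i.succ, ∀ x ∈ c i.castSucc, g * x * g⁻¹ ∈ c i.castSucc) ∧
      ((∀ x ∈ c i.succ, ∃ k : ℕ, x ^ (p ^ k) ∈ c i.castSucc) ∨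
       (∀ x ∈ c i.succ, ∃ m : ℕ, ¬ (p ∣ m) ∧ x ^ m ∈ c i.castSucc))

/-- `K/H` (for `H ⊴ K`) is solvable. -/
def IsSolvableQuot {G : Type*} [Group G] (H K : Subgroup G) : Prop :=
  ∃ (n : ℕ) (c : Fin (n + 1) → Subgroup G), c 0 = H ∧ c (Fin.last n) = K ∧
    ∀ i : Fin n, c i.castSucc ≤ c i.succ ∧
      (∀ g ∈ c i.succ, ∀ x ∈ c i.castSucc, g * x * g⁻¹ ∈ c i.castSucc) ∧
      (∀ g ∈ c i.succ, ∀ h ∈ c i.succ, g * h * g⁻¹ * h⁻¹ ∈ c i.castSucc)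

namespace FusionSystem

/-- `P` and `Q` are `F`-conjugate (isomorphic in `F`). -/
def IsConjF (F : FusionSystem S) (P Q : Subgroup S) : Prop :=
  ∃ φ ∈ F.Hom P Q, Function.Surjective φ

/-- The subgroup `N_φ` attached to a morphism `φ : Q → P` of `F`. -/
def NPhi (F : FusionSystem S) {Q P : Subgroup S} (φ : ↥Q →* ↥P) : Subgroup S where
  carrier := {g | g ∈ F.base ∧ g ∈ Subgroup.normalizer (Q : Set S) ∧ ∃ h ∈ F.base,
    ∀ (x : S) (hx : x ∈ Q) (hgx : g * x * g⁻¹ ∈ Q),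
      (φ ⟨g * x * g⁻¹, hgx⟩ : S) = h * (φ ⟨x, hx⟩ : S) * h⁻¹}
  one_mem' := by
    refine ⟨one_mem _, one_mem _, 1, one_mem _, fun x hx hgx => ?_⟩
    rw [hom_congr_val φ (show (1:S) * x * 1⁻¹ = x by group) hgx hx]
    group
  mul_mem' := by
    rintro g₁ g₂ ⟨hb₁, hn₁, h₁, hh₁, C₁⟩ ⟨hb₂, hn₂, h₂, hh₂, C₂⟩
    refine ⟨mul_mem hb₁ hb₂, mul_mem hn₁ hn₂, h₁ * h₂, mul_mem hh₁ hh₂, fun x hx hgx => ?_⟩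
    have hy : g₂ * x * g₂⁻¹ ∈ Q := (Subgroup.mem_normalizer_iff.mp hn₂ x).mp hx
    have hgy : g₁ * (g₂ * x * g₂⁻¹) * g₁⁻¹ ∈ Q := by
      have : g₁ * g₂ * x * (g₁ * g₂)⁻¹ = g₁ * (g₂ * x * g₂⁻¹) * g₁⁻¹ := by group
      rw [← this]; exact hgx
    rw [hom_congr_val φ (show g₁ * g₂ * x * (g₁ * g₂)⁻¹ = g₁ * (g₂ * x * g₂⁻¹) * g₁⁻¹ by group)
        hgx hgy, C₁ _ hy hgy, C₂ _ hx hy]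
    group
  inv_mem' := by
    rintro g ⟨hb, hn, h, hh, C⟩
    refine ⟨F.base.inv_mem hb, (Subgroup.normalizer (Q : Set S)).inv_mem hn, h⁻¹, F.base.inv_mem hh, fun x hx hgx => ?_⟩
    have hy : g⁻¹ * x * g ∈ Q := by
      have : g⁻¹ * x * g⁻¹⁻¹ = g⁻¹ * x * g := by group
      rw [← this]; exact hgx
    have hgy : g * (g⁻¹ * x * g) * g⁻¹ ∈ Q := by
      have : g * (g⁻¹ * x * g) * g⁻¹ = x := by group
      rw [this]; exact hx
    have key := C _ hy hgy
    rw [hom_congr_val φ (show g * (g⁻¹ * x * g) * g⁻¹ = x by group) hgy hx] at key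
    rw [hom_congr_val φ (show g⁻¹ * x * g⁻¹⁻¹ = g⁻¹ * x * g by group) hgx hy]
    rw [key]; group

/-- `P` is receptive in `F`: every `F`-isomorphism onto `P` extends to `N_φ`. -/
def Receptive (F : FusionSystem S) (P : Subgroup S) : Prop :=
  ∀ (Q : Subgroup S) (φ : ↥Q →* ↥P), φ ∈ F.Hom Q P → Function.Surjective φ →
    ∃ ψ ∈ F.Hom (F.NPhi φ) F.base, ∀ (x : ↥(F.NPhi φ)) (hx : (x : S) ∈ Q),
      (ψ x : S) = (φ ⟨x, hx⟩ : S)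

/-- `P` is fully automized in `F`: `Aut_S(P)` is a Sylow `p`-subgroup of `Aut_F(P)`. -/
def FullyAutomized (p : ℕ) (F : FusionSystem S) (P : Subgroup S) : Prop :=
  IsSylowIn p (AutConj F.base P) (F.AutF P)

/-- `F` is saturated: every conjugacy class contains a fully automized receptive member. -/
def Saturated (p : ℕ) (F : FusionSystem S) : Prop :=
  ∀ P : Subgroup S, P ≤ F.base → ∃ Q, F.IsConjF P Q ∧ F.FullyAutomized p Q ∧ F.Receptive Q

/-- `P` is `F`-centric. -/
def Centric (F : FusionSystem S) (P : Subgroup S) : Prop :=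
  P ≤ F.base ∧ ∀ Q, F.IsConjF P Q → F.base ⊓ Subgroup.centralizer (Q : Set S) ≤ Q

/-- `P` is `F`-radical: `O_p(Out_F(P)) = 1`. -/
def Radical (p : ℕ) (F : FusionSystem S) (P : Subgroup S) : Prop :=
  subPCore p (F.OutF P) = ⊥

/-- `T` is strongly closed in `F`. -/
def StronglyClosedIn (F : FusionSystem S) (T : Subgroup S) : Prop :=
  ∀ (P Q : Subgroup S), P ≤ T → ∀ f ∈ F.Hom P Q, ∀ x : ↥P, (f x : S) ∈ T

end FusionSystem
/-- The image of a subgroup `P ≤ T` under an automorphism `α` of `T`. -/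
def trSub (T : Subgroup S) (α : MulAut ↥T) (P : Subgroup S) : Subgroup S :=
  (Subgroup.map α.toMonoidHom (P.subgroupOf T)).map T.subtype

theorem trSub_le (T : Subgroup S) (α : MulAut ↥T) (P : Subgroup S) : trSub T α P ≤ T := by
  rintro x ⟨y, _, rfl⟩; exact y.2

theorem mem_trSub {T : Subgroup S} {α : MulAut ↥T} {P : Subgroup S} {x : ↥T}
    (hx : (x : S) ∈ P) : ((α x : ↥T) : S) ∈ trSub T α P :=
  ⟨α x, ⟨x, (Subgroup.mem_subgroupOf).2 hx, rfl⟩, rfl⟩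

theorem trSub_one (T : Subgroup S) {P : Subgroup S} (hP : P ≤ T) : trSub T 1 P = P := by
  have h : Subgroup.map (MulEquiv.toMonoidHom (1 : MulAut ↥T)) (P.subgroupOf T)
      = P.subgroupOf T := by
    ext x; simp [Subgroup.mem_map]
  rw [trSub, h, Subgroup.subgroupOf_map_subtype, inf_eq_left.2 hP]

theorem trSub_mul (T : Subgroup S) (α β : MulAut ↥T) (P : Subgroup S) :
    trSub T α (trSub T β P) = trSub T (α * β) P := by
  unfold trSub
  rw [Subgroup.subgroupOf, Subgroup.comap_map_eq_self_of_injective (Subgroup.subtype_injective T),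
    Subgroup.map_map, Subgroup.map_map]
  have h : (T.subtype.comp (MulEquiv.toMonoidHom α)).comp (MulEquiv.toMonoidHom β)
      = T.subtype.comp (MulEquiv.toMonoidHom (α * β)) := by ext x; rfl
  rw [h, Subgroup.map_map]

/-- `ψ` is the morphism obtained from `φ` by transport along the automorphism `α` of `T`. -/
def TransportEq (T : Subgroup S) (α : MulAut ↥T) {P Q P' Q' : Subgroup S}
    (φ : ↥P →* ↥Q) (ψ : ↥P' →* ↥Q') : Prop :=
  ∀ (x : ↥T) (hx : (x : S) ∈ P) (hαx : ((α x : ↥T) : S) ∈ P')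
    (hm : ((φ ⟨(x : S), hx⟩ : ↥Q) : S) ∈ T),
    ((ψ ⟨((α x : ↥T) : S), hαx⟩ : ↥Q') : S)
      = ((α ⟨((φ ⟨(x : S), hx⟩ : ↥Q) : S), hm⟩ : ↥T) : S)

namespace FusionSystem

/-- `α` carries the fusion data of `E` into itself (one direction of "fusion preserving"). -/
def IsFP (E : FusionSystem S) (α : MulAut ↥E.base) : Prop :=
  ∀ (P Q : Subgroup S) (φ : ↥P →* ↥Q), φ ∈ E.Hom P Q →
    ∃ ψ ∈ E.Hom (trSub E.base α P) (trSub E.base α Q), TransportEq E.base α φ ψ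

/-- `α ∈ Aut(T)` is fusion preserving with respect to `E`, i.e. extends to an automorphism of
the category `E`. -/
def IsFPAut (E : FusionSystem S) (α : MulAut ↥E.base) : Prop :=
  E.IsFP α ∧ E.IsFP α⁻¹

theorem isFP_one (E : FusionSystem S) : E.IsFP 1 := by
  intro P Q φ hφ
  have hP := (E.mem_le hφ).1
  have hQ := (E.mem_le hφ).2
  refine ⟨homRestrict φ (le_of_eq (trSub_one E.base hP)) (le_of_eq (trSub_one E.base hQ).symm),
    E.homRestrict_mem hφ _ _ (trSub_le _ _ _), ?_⟩
  intro x hx hαx hm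
  rw [homRestrict_coe]
  have h1 : ((φ ⟨(((1 : MulAut ↥E.base) x : ↥E.base) : S), le_of_eq (trSub_one E.base hP) hαx⟩
      : ↥Q) : S) = ((φ ⟨(x : S), hx⟩ : ↥Q) : S) := by
    exact congrArg _ (hom_congr_val φ rfl _ _)
  rw [h1]
  rfl

theorem isFP_mul {E : FusionSystem S} {α β : MulAut ↥E.base} (hα : E.IsFP α) (hβ : E.IsFP β) :
    E.IsFP (α * β) := by
  intro P Q φ hφ
  obtain ⟨ψ₁, hψ₁, hc₁⟩ := hβ P Q φ hφ
  obtain ⟨ψ₂, hψ₂, hc₂⟩ := hα _ _ ψ₁ hψ₁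
  refine ⟨homRestrict ψ₂ (le_of_eq (trSub_mul E.base α β P).symm)
      (le_of_eq (trSub_mul E.base α β Q)),
    E.homRestrict_mem hψ₂ _ _ (trSub_le _ _ _), ?_⟩
  intro x hx hαβx hm
  rw [homRestrict_coe]
  have hβx : ((β x : ↥E.base) : S) ∈ trSub E.base β P := mem_trSub hx
  have hm' : ((ψ₁ ⟨((β x : ↥E.base) : S), hβx⟩ : _) : S) ∈ E.base :=
    trSub_le _ _ _ (ψ₁ ⟨((β x : ↥E.base) : S), hβx⟩).2
  have hααx : ((α (β x) : ↥E.base) : S) ∈ trSub E.base α (trSub E.base β P) := mem_trSub hβx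
  have key₂ := hc₂ (β x) hβx hααx hm'
  have key₁ := hc₁ x hx hβx hm
  have harg : (⟨(((α * β) x : ↥E.base) : S),
      le_of_eq (trSub_mul E.base α β P).symm hαβx⟩ : ↥(trSub E.base α (trSub E.base β P)))
      = ⟨((α (β x) : ↥E.base) : S), hααx⟩ := by
    exact Subtype.ext rfl
  rw [harg, key₂]
  have harg2 : (⟨((ψ₁ ⟨((β x : ↥E.base) : S), hβx⟩ : _) : S), hm'⟩ : ↥E.base)
      = β ⟨((φ ⟨(x : S), hx⟩ : ↥Q) : S), hm⟩ := Subtype.ext key₁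
  rw [harg2]
  rfl

/-- `Aut(T,E)`: the group of fusion preserving automorphisms of the underlying group of `E`. -/
def AutE (E : FusionSystem S) : Subgroup (MulAut ↥E.base) where
  carrier := {α | E.IsFPAut α}
  one_mem' := ⟨E.isFP_one, by rw [inv_one]; exact E.isFP_one⟩
  mul_mem' h₁ h₂ := ⟨isFP_mul h₁.1 h₂.1, by rw [mul_inv_rev]; exact isFP_mul h₂.2 h₁.2⟩
  inv_mem' h := ⟨h.2, by rw [inv_inv]; exact h.1⟩

end FusionSystem

/-- `E` is a subsystem of `F`. -/
structure IsSub (E F : FusionSystem S) : Prop where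
  base_le : E.base ≤ F.base
  hom_le : ∀ P Q : Subgroup S, E.Hom P Q ⊆ F.Hom P Q

/-- `E` is a normal (saturated) subsystem of `F`. -/
structure IsNormal (p : ℕ) (E F : FusionSystem S) : Prop where
  sub : IsSub E F
  sat : E.Saturated p
  strongly_closed : F.StronglyClosedIn E.base
  invariant : ∀ α ∈ F.AutF E.base, E.IsFPAut α
  frattini : ∀ P : Subgroup S, P ≤ E.base → ∀ φ : ↥P →* ↥E.base, φ ∈ F.Hom P E.base →
    ∃ α ∈ F.AutF E.base, ∃ φ₀ ∈ E.Hom P E.base, ∀ x : ↥P, φ x = α (φ₀ x)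
  extension : ∀ α ∈ E.AutF E.base,
    ∃ β ∈ F.AutF (E.base ⊔ Subgroup.centralizer (E.base : Set S)),
      (∀ (x : S) (hx : x ∈ E.base)
        (hx' : x ∈ E.base ⊔ Subgroup.centralizer (E.base : Set S)),
        ((β ⟨x, hx'⟩ : _) : S) = ((α ⟨x, hx⟩ : _) : S)) ∧
      (∀ (x : S) (hx : x ∈ Subgroup.centralizer (E.base : Set S))
        (hx' : x ∈ E.base ⊔ Subgroup.centralizer (E.base : Set S)),
        ((β ⟨x, hx'⟩ : _) : S) * x⁻¹ ∈ E.base ⊓ Subgroup.centralizer (E.base : Set S))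
namespace FusionSystem

/-- The hyperfocal subgroup `hyp(F)`. -/
def hyp (p : ℕ) (F : FusionSystem S) : Subgroup S :=
  Subgroup.closure {x | ∃ P : Subgroup S, P ≤ F.base ∧
    ∃ α ∈ subResidual p (F.AutF P), ∃ g : ↥P, x = ((α g : ↥P) : S) * (g : S)⁻¹}

theorem hyp_le (p : ℕ) (F : FusionSystem S) : F.hyp p ≤ F.base := by
  rw [hyp, Subgroup.closure_le]
  rintro x ⟨P, hP, α, -, g, rfl⟩
  exact mul_mem (hP (α g).2) (F.base.inv_mem (hP g.2))

end FusionSystem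

/-- `E` is a subsystem of `p`-power index in `F`. -/
def HasPPowerIndex (p : ℕ) (E F : FusionSystem S) : Prop :=
  IsSub E F ∧ F.hyp p ≤ E.base ∧
    ∀ P : Subgroup S, P ≤ E.base → subResidual p (F.AutF P) ≤ E.AutF P

/-- `E` is a subsystem of index prime to `p` in `F` (over the same underlying group). -/
def HasPrimeToPIndex (p : ℕ) (E F : FusionSystem S) : Prop :=
  IsSub E F ∧ E.base = F.base ∧
    ∀ P : Subgroup S, subPrimeResidual p (F.AutF P) ≤ E.AutF P

/-- The intersection of a family of fusion subsystems of `F` whose bases all contain `B`,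
cut down to the base `B`. -/
def interFS (F : FusionSystem S) (B : Subgroup S) (hB : B ≤ F.base)
    (𝒮 : Set (FusionSystem S)) (h𝒮 : ∀ E ∈ 𝒮, B ≤ E.base) : FusionSystem S where
  base := B
  Hom P Q := {f | f ∈ F.Hom P Q ∧ P ≤ B ∧ Q ≤ B ∧ ∀ E ∈ 𝒮, f ∈ E.Hom P Q}
  mem_le h := ⟨h.2.1, h.2.2.1⟩
  inj h := F.inj h.1
  conj_mem g hg hP hQ f hf :=
    ⟨F.conj_mem g (hB hg) (hP.trans hB) (hQ.trans hB) f hf, hP, hQ, fun E hE =>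
      E.conj_mem g (h𝒮 E hE hg) (hP.trans (h𝒮 E hE)) (hQ.trans (h𝒮 E hE)) f hf⟩
  comp_mem hf hg := ⟨F.comp_mem hf.1 hg.1, hf.2.1, hg.2.2.1, fun E hE =>
    E.comp_mem (hf.2.2.2 E hE) (hg.2.2.2 E hE)⟩
  corestrict_mem := by
    rintro P Q R f hf g hagree hsurj
    refine ⟨F.corestrict_mem hf.1 g hagree hsurj, hf.2.1, ?_, fun E hE =>
      E.corestrict_mem (hf.2.2.2 E hE) g hagree hsurj⟩
    rintro r hr
    obtain ⟨x, hx⟩ := hsurj ⟨r, hr⟩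
    have : r = ((g x : ↥R) : S) := by rw [hx]
    rw [this, hagree]
    exact hf.2.2.1 (f x).2
  inv_mem hf g h1 h2 := ⟨F.inv_mem hf.1 g h1 h2, hf.2.2.1, hf.2.1, fun E hE =>
    E.inv_mem (hf.2.2.2 E hE) g h1 h2⟩

namespace FusionSystem

/-- `O^p(F)`: the (unique) saturated subsystem of `p`-power index over `hyp(F)`. -/
def Op (p : ℕ) (F : FusionSystem S) : FusionSystem S :=
  interFS F (F.hyp p) (F.hyp_le p)
    {E | E.Saturated p ∧ HasPPowerIndex p E F ∧ E.base = F.hyp p}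
    (fun _ hE => le_of_eq hE.2.2.symm)

/-- `O^{p'}(F)`: the smallest normal subsystem of `F` of index prime to `p`. -/
def Opp (p : ℕ) (F : FusionSystem S) : FusionSystem S :=
  interFS F F.base le_rfl
    {E | E.Saturated p ∧ IsNormal p E F ∧ HasPrimeToPIndex p E F}
    (fun _ hE => le_of_eq hE.2.2.2.1.symm)

/-- The sequence `F = F⁽⁰⁾ ⊇ F⁽¹⁾ ⊇ ⋯` with `F⁽ⁱ⁺¹⁾ = O^{p'}(O^p(F⁽ⁱ⁾))`. -/
def Fseq (p : ℕ) (F : FusionSystem S) : ℕ → FusionSystem S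
  | 0 => F
  | n + 1 => Opp p (Op p (Fseq p F n))

/-- `F^∞ = ⋂ᵢ F⁽ⁱ⁾`. -/
def Finfty (p : ℕ) (F : FusionSystem S) : FusionSystem S :=
  interFS F (⨅ n, (Fseq p F n).base) (iInf_le (fun n => (Fseq p F n).base) 0)
    (Set.range (Fseq p F)) (by rintro E ⟨n, rfl⟩; exact iInf_le (fun n => (Fseq p F n).base) n)

/-- `E ≤ C_F(P)`: every morphism of `E` extends to a morphism of `F` on the join with `P`
which restricts to the identity on `P` (and `E` lives in `C_S(P)`). -/
def LeCentralizer (E F : FusionSystem S) (P : Subgroup S) : Prop :=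
  E.base ≤ F.base ⊓ Subgroup.centralizer (P : Set S) ∧
  ∀ (Q R : Subgroup S) (f : ↥Q →* ↥R), f ∈ E.Hom Q R →
    ∃ φ ∈ F.Hom (Q ⊔ P) (R ⊔ P),
      (∀ (x : S) (hx : x ∈ Q) (hx' : x ∈ Q ⊔ P), ((φ ⟨x, hx'⟩ : _) : S) = ((f ⟨x, hx⟩ : _) : S)) ∧
      (∀ (x : S) (hx : x ∈ P) (hx' : x ∈ Q ⊔ P), ((φ ⟨x, hx'⟩ : _) : S) = x)

/-- `C_S(E) ≤ T` (where `T` is the base of `E`): any `P ≤ C_S(T)` with `E ≤ C_F(P)`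
is contained in `T`. -/
def CentLe (E F : FusionSystem S) : Prop :=
  ∀ P : Subgroup S, P ≤ Subgroup.centralizer (E.base : Set S) → E.LeCentralizer F P →
    P ≤ E.base

end FusionSystem

/-- The fusion system over `B` generated by a collection `X` of injective homomorphisms
between subgroups of `B`: the smallest fusion system over `B` containing `X`. -/
def genFS (B : Subgroup S) (X : ∀ P Q : Subgroup S, Set (↥P →* ↥Q))
    (hX : ∀ P Q, ∀ f ∈ X P Q, P ≤ B ∧ Q ≤ B ∧ Function.Injective f) : FusionSystem S where
  base := B
  Hom P Q := {f | P ≤ B ∧ Q ≤ B ∧ Function.Injective f ∧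
    ∀ F' : FusionSystem S, F'.base = B → (∀ P' Q', X P' Q' ⊆ F'.Hom P' Q') → f ∈ F'.Hom P Q}
  mem_le h := ⟨h.1, h.2.1⟩
  inj h := h.2.2.1
  conj_mem := by
    rintro P Q g hg hP hQ f hf
    refine ⟨hP, hQ, ?_, fun F' hb hX' => F'.conj_mem g (hb ▸ hg) (hb ▸ hP) (hb ▸ hQ) f hf⟩
    intro x y hxy
    have : (f x : S) = (f y : S) := by rw [hxy]
    rw [hf, hf] at this
    exact Subtype.ext (by
      have := mul_left_cancel (mul_right_cancel this)
      exact this)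
  comp_mem hf hg := ⟨hf.1, hg.2.1, hg.2.2.1.comp hf.2.2.1, fun F' hb hX' =>
    F'.comp_mem (hf.2.2.2 F' hb hX') (hg.2.2.2 F' hb hX')⟩
  corestrict_mem := by
    rintro P Q R f hf g hagree hsurj
    refine ⟨hf.1, ?_, ?_, fun F' hb hX' => F'.corestrict_mem (hf.2.2.2 F' hb hX') g hagree hsurj⟩
    · rintro r hr
      obtain ⟨x, hx⟩ := hsurj ⟨r, hr⟩
      have : r = ((g x : ↥R) : S) := by rw [hx]
      rw [this, hagree]
      exact hf.2.1 (f x).2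
    · intro x y hxy
      have : (g x : S) = (g y : S) := by rw [hxy]
      rw [hagree, hagree] at this
      exact hf.2.2.1 (Subtype.ext this)
  inv_mem hf g h1 h2 := ⟨hf.2.1, hf.1, Function.LeftInverse.injective h2, fun F' hb hX' =>
    F'.inv_mem (hf.2.2.2 F' hb hX') g h1 h2⟩
section QuotFS

variable [Finite S]

namespace FusionSystem

theorem resT_surj (F : FusionSystem S) {T P Q : Subgroup S}
    (hsc : F.StronglyClosedIn T) (hTP : T ≤ P) {φ : ↥P →* ↥Q} (hφ : φ ∈ F.Hom P Q) :
    ∀ t ∈ T, ∃ t' ∈ T, ∃ h : t' ∈ P, ((φ ⟨t', h⟩ : ↥Q) : S) = t := by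
  have hmemT : ∀ x : ↥T, ((φ ⟨(x : S), hTP x.2⟩ : ↥Q) : S) ∈ T := by
    intro x
    have hres : homRestrict φ hTP (le_refl Q) ∈ F.Hom T Q :=
      F.homRestrict_mem hφ hTP (le_refl Q) (F.mem_le hφ).2
    have h2 := hsc T Q le_rfl _ hres x
    rwa [homRestrict_coe] at h2
  have hsurj : Function.Surjective
      (fun x : ↥T => (⟨((φ ⟨(x : S), hTP x.2⟩ : ↥Q) : S), hmemT x⟩ : ↥T)) := by
    refine Finite.injective_iff_surjective.mp ?_
    intro x y hxy
    have h1 : ((φ ⟨(x : S), hTP x.2⟩ : ↥Q) : S) = ((φ ⟨(y : S), hTP y.2⟩ : ↥Q) : S) :=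
      congrArg (Subtype.val : ↥T → S) hxy
    have h2 : (⟨(x : S), hTP x.2⟩ : ↥P) = ⟨(y : S), hTP y.2⟩ := F.inj hφ (Subtype.ext h1)
    exact Subtype.ext (congrArg (Subtype.val : ↥P → S) h2)
  intro t ht
  obtain ⟨x, hx⟩ := hsurj ⟨t, ht⟩
  exact ⟨(x : S), x.2, hTP x.2, congrArg Subtype.val hx⟩

/-- The quotient fusion system `F/T` over `S/T`, for `T` a strongly closed subgroup. -/
def quotFS (F : FusionSystem S) (T : Subgroup S) [T.Normal]
    (hT : T ≤ F.base) (hsc : F.StronglyClosedIn T) : FusionSystem (S ⧸ T) where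
  base := F.base.map (QuotientGroup.mk' T)
  Hom Pb Qb := {f | ∃ (P Q : Subgroup S) (_ : T ≤ P) (_ : T ≤ Q)
    (φ : ↥P →* ↥Q) (_ : φ ∈ F.Hom P Q),
    Pb = P.map (QuotientGroup.mk' T) ∧ Qb = Q.map (QuotientGroup.mk' T) ∧
    ∀ (x : S) (hx : x ∈ P) (hx' : QuotientGroup.mk' T x ∈ Pb),
      ((f ⟨QuotientGroup.mk' T x, hx'⟩ : ↥Qb) : S ⧸ T)
        = QuotientGroup.mk' T ((φ ⟨x, hx⟩ : ↥Q) : S)}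
  mem_le := by
    rintro Pb Qb f ⟨P, Q, hTP, hTQ, φ, hφ, rfl, rfl, hcom⟩
    exact ⟨Subgroup.map_mono (F.mem_le hφ).1, Subgroup.map_mono (F.mem_le hφ).2⟩
  inj := by
    rintro Pb Qb f ⟨P, Q, hTP, hTQ, φ, hφ, rfl, rfl, hcom⟩
    intro a b hab
    obtain ⟨xa, hxaP, hxa⟩ := Subgroup.mem_map.mp a.2
    obtain ⟨xb, hxbP, hxb⟩ := Subgroup.mem_map.mp b.2
    have ha : a = ⟨QuotientGroup.mk' T xa, hxa ▸ a.2⟩ := Subtype.ext hxa.symm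
    have hb : b = ⟨QuotientGroup.mk' T xb, hxb ▸ b.2⟩ := Subtype.ext hxb.symm
    rw [ha, hb] at hab
    have h1 := hcom xa hxaP (hxa ▸ a.2)
    have h2 := hcom xb hxbP (hxb ▸ b.2)
    have h3 : QuotientGroup.mk' T ((φ ⟨xa, hxaP⟩ : ↥Q) : S)
        = QuotientGroup.mk' T ((φ ⟨xb, hxbP⟩ : ↥Q) : S) := by
      rw [← h1, ← h2, hab]
    obtain ⟨z, hz, hz2⟩ := (QuotientGroup.mk'_eq_mk' T).mp h3
    obtain ⟨t', ht'T, ht'P, ht'⟩ := F.resT_surj hsc hTP hφ z hz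
    have h4 : φ (⟨xa, hxaP⟩ * ⟨t', ht'P⟩) = φ ⟨xb, hxbP⟩ := by
      rw [map_mul]
      refine Subtype.ext ?_
      rw [Subgroup.coe_mul, ht']
      exact hz2
    have h5 := F.inj hφ h4
    have h6 : xa * t' = xb := congrArg Subtype.val h5
    rw [ha, hb]
    refine Subtype.ext ?_
    show QuotientGroup.mk' T xa = QuotientGroup.mk' T xb
    exact (QuotientGroup.mk'_eq_mk' T).mpr ⟨t', ht'T, h6⟩
  conj_mem := by
    rintro Pb Qb gq hgq hPb hQb f hf
    obtain ⟨g, hg, hgeq⟩ := Subgroup.mem_map.mp hgq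
    set P : Subgroup S := Subgroup.comap (QuotientGroup.mk' T) Pb with hPdef
    set Q : Subgroup S := Subgroup.comap (QuotientGroup.mk' T) Qb with hQdef
    have hTP : T ≤ P := by
      intro t ht
      have h1 : QuotientGroup.mk' T t = 1 := by
        rw [← (QuotientGroup.mk' T).mem_ker, QuotientGroup.ker_mk']; exact ht
      show QuotientGroup.mk' T t ∈ Pb
      rw [h1]; exact one_mem Pb
    have hTQ : T ≤ Q := by
      intro t ht
      have h1 : QuotientGroup.mk' T t = 1 := by
        rw [← (QuotientGroup.mk' T).mem_ker, QuotientGroup.ker_mk']; exact ht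
      show QuotientGroup.mk' T t ∈ Qb
      rw [h1]; exact one_mem Qb
    have hPbase : P ≤ F.base := by
      have h1 : P ≤ Subgroup.comap (QuotientGroup.mk' T) (F.base.map (QuotientGroup.mk' T)) :=
        Subgroup.comap_mono hPb
      rwa [Subgroup.comap_map_eq, QuotientGroup.ker_mk', sup_eq_left.mpr hT] at h1
    have hQbase : Q ≤ F.base := by
      have h1 : Q ≤ Subgroup.comap (QuotientGroup.mk' T) (F.base.map (QuotientGroup.mk' T)) :=
        Subgroup.comap_mono hQb
      rwa [Subgroup.comap_map_eq, QuotientGroup.ker_mk', sup_eq_left.mpr hT] at h1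
    have hconj : ∀ x ∈ P, g * x * g⁻¹ ∈ Q := by
      intro x hx
      show QuotientGroup.mk' T (g * x * g⁻¹) ∈ Qb
      have h1 : QuotientGroup.mk' T (g * x * g⁻¹)
          = gq * QuotientGroup.mk' T x * gq⁻¹ := by
        rw [map_mul, map_mul, map_inv, hgeq]
      rw [h1, ← hf ⟨QuotientGroup.mk' T x, hx⟩]
      exact (f ⟨QuotientGroup.mk' T x, hx⟩).2
    refine ⟨P, Q, hTP, hTQ, conjHom g hconj,
      F.conj_mem g hg hPbase hQbase _ (fun x => rfl), ?_, ?_, ?_⟩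
    · exact (Subgroup.map_comap_eq_self_of_surjective (QuotientGroup.mk'_surjective T) Pb).symm
    · exact (Subgroup.map_comap_eq_self_of_surjective (QuotientGroup.mk'_surjective T) Qb).symm
    · intro x hx hx'
      rw [hf ⟨QuotientGroup.mk' T x, hx'⟩]
      show gq * QuotientGroup.mk' T x * gq⁻¹ = QuotientGroup.mk' T (g * x * g⁻¹)
      rw [map_mul, map_mul, map_inv, hgeq]
  comp_mem := by
    rintro Pb Qb Rb f1 f2 ⟨P₁, Q₁, hTP₁, hTQ₁, φ₁, hφ₁, rfl, rfl, hcom₁⟩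
      ⟨P₂, Q₂, hTP₂, hTQ₂, φ₂, hφ₂, hQ₁P₂, rfl, hcom₂⟩
    have hQ₁eqP₂ : Q₁ = P₂ := by
      have h1 : Subgroup.comap (QuotientGroup.mk' T) (Q₁.map (QuotientGroup.mk' T))
          = Subgroup.comap (QuotientGroup.mk' T) (P₂.map (QuotientGroup.mk' T)) := by
        rw [← hQ₁P₂]
      rw [Subgroup.comap_map_eq, Subgroup.comap_map_eq, QuotientGroup.ker_mk',
        sup_eq_left.mpr hTQ₁, sup_eq_left.mpr hTP₂] at h1
      exact h1
    have hres : homRestrict φ₁ (le_refl P₁) (le_of_eq hQ₁eqP₂) ∈ F.Hom P₁ P₂ :=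
      F.homRestrict_mem hφ₁ _ _ (hQ₁eqP₂ ▸ (F.mem_le hφ₁).2)
    refine ⟨P₁, Q₂, hTP₁, hTQ₂, φ₂.comp (homRestrict φ₁ (le_refl P₁) (le_of_eq hQ₁eqP₂)),
      F.comp_mem hres hφ₂, rfl, rfl, ?_⟩
    intro x hx hx'
    have h1 := hcom₁ x hx hx'
    have hmem1 : ((φ₁ ⟨x, hx⟩ : ↥Q₁) : S) ∈ P₂ := hQ₁eqP₂ ▸ (φ₁ ⟨x, hx⟩).2
    have hmem1' : QuotientGroup.mk' T ((φ₁ ⟨x, hx⟩ : ↥Q₁) : S) ∈ P₂.map (QuotientGroup.mk' T) :=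
      Subgroup.mem_map.mpr ⟨_, hmem1, rfl⟩
    have h2 := hcom₂ ((φ₁ ⟨x, hx⟩ : ↥Q₁) : S) hmem1 (hQ₁P₂.symm ▸ hmem1')
    have harg : f1 ⟨QuotientGroup.mk' T x, hx'⟩
        = ⟨QuotientGroup.mk' T ((φ₁ ⟨x, hx⟩ : ↥Q₁) : S), hQ₁P₂.symm ▸ hmem1'⟩ :=
      Subtype.ext h1
    show ((f2 (f1 ⟨QuotientGroup.mk' T x, hx'⟩) : _) : S ⧸ T) = _
    rw [harg]
    exact h2
  corestrict_mem := by
    rintro Pb Qb Rb f ⟨P, Q, hTP, hTQ, φ, hφ, rfl, rfl, hcom⟩ g hagree hsurj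
    set R₀ : Subgroup S := Subgroup.comap (QuotientGroup.mk' T) Rb with hR₀def
    have hTR₀ : T ≤ R₀ := by
      intro t ht
      have h1 : QuotientGroup.mk' T t = 1 := by
        rw [← (QuotientGroup.mk' T).mem_ker, QuotientGroup.ker_mk']; exact ht
      show QuotientGroup.mk' T t ∈ Rb
      rw [h1]; exact one_mem Rb
    have hRbQ : Rb ≤ Q.map (QuotientGroup.mk' T) := by
      rintro r hr
      obtain ⟨x, hx⟩ := hsurj ⟨r, hr⟩
      have h1 : r = ((g x : ↥Rb) : S ⧸ T) := by rw [hx]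
      rw [h1, hagree]
      exact (f x).2
    have hR₀base : R₀ ≤ F.base := by
      have h1 : R₀ ≤ Subgroup.comap (QuotientGroup.mk' T) (Q.map (QuotientGroup.mk' T)) :=
        Subgroup.comap_mono hRbQ
      rw [Subgroup.comap_map_eq, QuotientGroup.ker_mk', sup_eq_left.mpr hTQ] at h1
      exact h1.trans (F.mem_le hφ).2
    have hImmem : ∀ x : ↥P, (Q.subtype.comp φ) x ∈ (φ.range).map Q.subtype :=
      fun x => ⟨φ x, ⟨x, rfl⟩, rfl⟩
    have hImR₀ : (φ.range).map Q.subtype ≤ R₀ := by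
      rintro y ⟨q, ⟨a, rfl⟩, rfl⟩
      have hmka : QuotientGroup.mk' T (a : S) ∈ P.map (QuotientGroup.mk' T) :=
        Subgroup.mem_map.mpr ⟨(a : S), a.2, rfl⟩
      have h1 := hcom (a : S) a.2 hmka
      have h2 : (⟨(a : S), a.2⟩ : ↥P) = a := Subtype.ext rfl
      rw [h2] at h1
      show QuotientGroup.mk' T ((φ a : ↥Q) : S) ∈ Rb
      rw [← h1, ← hagree ⟨QuotientGroup.mk' T (a : S), hmka⟩]
      exact (g ⟨QuotientGroup.mk' T (a : S), hmka⟩).2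
    have hφIm : (Q.subtype.comp φ).codRestrict ((φ.range).map Q.subtype) hImmem
        ∈ F.Hom P ((φ.range).map Q.subtype) := by
      refine F.corestrict_mem hφ _ (fun x => rfl) ?_
      rintro ⟨y, q, ⟨a, rfl⟩, rfl⟩
      exact ⟨a, Subtype.ext rfl⟩
    refine ⟨P, R₀, hTP, hTR₀,
      homRestrict ((Q.subtype.comp φ).codRestrict ((φ.range).map Q.subtype) hImmem)
        (le_refl P) hImR₀,
      F.homRestrict_mem hφIm _ _ hR₀base, rfl,
      (Subgroup.map_comap_eq_self_of_surjective (QuotientGroup.mk'_surjective T) Rb).symm, ?_⟩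
    intro x hx hx'
    rw [hagree ⟨QuotientGroup.mk' T x, hx'⟩, hcom x hx hx']
    rfl
  inv_mem := by
    rintro Pb Qb f ⟨P, Q, hTP, hTQ, φ, hφ, rfl, rfl, hcom⟩ g h1 h2
    have hfsurj : Function.Surjective f := fun y => ⟨g y, h2 y⟩
    have hφsurj : Function.Surjective φ := by
      intro q
      have hmkq : QuotientGroup.mk' T (q : S) ∈ Q.map (QuotientGroup.mk' T) :=
        Subgroup.mem_map.mpr ⟨(q : S), q.2, rfl⟩
      obtain ⟨ab, hab⟩ := hfsurj ⟨QuotientGroup.mk' T (q : S), hmkq⟩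
      obtain ⟨a, haP, haeq⟩ := Subgroup.mem_map.mp ab.2
      have hab2 : ab = ⟨QuotientGroup.mk' T a, haeq ▸ ab.2⟩ := Subtype.ext haeq.symm
      rw [hab2] at hab
      have h3 := hcom a haP (haeq ▸ ab.2)
      have h4 : QuotientGroup.mk' T ((φ ⟨a, haP⟩ : ↥Q) : S) = QuotientGroup.mk' T (q : S) := by
        rw [← h3, hab]
      obtain ⟨z, hz, hz2⟩ := (QuotientGroup.mk'_eq_mk' T).mp h4
      obtain ⟨t', ht'T, ht'P, ht'⟩ := F.resT_surj hsc hTP hφ z hz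
      refine ⟨⟨a, haP⟩ * ⟨t', ht'P⟩, ?_⟩
      refine Subtype.ext ?_
      rw [map_mul, Subgroup.coe_mul, ht']
      exact hz2
    have hbij : Function.Bijective φ := ⟨F.inj hφ, hφsurj⟩
    refine ⟨Q, P, hTQ, hTP, (MulEquiv.ofBijective φ hbij).symm.toMonoidHom,
      F.inv_mem hφ _ (fun x => (MulEquiv.ofBijective φ hbij).symm_apply_apply x)
        (fun y => (MulEquiv.ofBijective φ hbij).apply_symm_apply y), rfl, rfl, ?_⟩
    intro y hy hy'
    set a : ↥P := (MulEquiv.ofBijective φ hbij).symm ⟨y, hy⟩ with hadef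
    have hφa : φ a = ⟨y, hy⟩ := (MulEquiv.ofBijective φ hbij).apply_symm_apply ⟨y, hy⟩
    have hmka : QuotientGroup.mk' T (a : S) ∈ P.map (QuotientGroup.mk' T) :=
      Subgroup.mem_map.mpr ⟨(a : S), a.2, rfl⟩
    have h3 := hcom (a : S) a.2 hmka
    have h4 : (⟨(a : S), a.2⟩ : ↥P) = a := Subtype.ext rfl
    rw [h4, hφa] at h3
    have h5 : f ⟨QuotientGroup.mk' T (a : S), hmka⟩ = ⟨QuotientGroup.mk' T y, hy'⟩ :=
      Subtype.ext h3
    have h6 : g ⟨QuotientGroup.mk' T y, hy'⟩ = ⟨QuotientGroup.mk' T (a : S), hmka⟩ := by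
      rw [← h5, h1]
    rw [h6]
    rfl

end FusionSystem

end QuotFS
/-- The fusion system `F_A(G)` over `A ≤ G`, with morphisms induced by conjugation by
elements of the subgroup `K` (take `K = ⊤` for the full fusion system of `G`). -/
def groupFS (G : Type*) [Group G] (K A : Subgroup G) (hAK : A ≤ K) : FusionSystem G where
  base := A
  Hom P Q := {f | P ≤ A ∧ Q ≤ A ∧ ∃ g ∈ K, ∀ x : ↥P, (f x : G) = g * x * g⁻¹}
  mem_le h := ⟨h.1, h.2.1⟩
  inj := by
    rintro P Q f ⟨hP, hQ, g, hg, hconj⟩ x y hxy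
    have h1 : (f x : G) = (f y : G) := by rw [hxy]
    rw [hconj, hconj] at h1
    exact Subtype.ext (mul_left_cancel (mul_right_cancel h1))
  conj_mem g hg hP hQ f hf := ⟨hP, hQ, g, hAK hg, hf⟩
  comp_mem := by
    rintro P Q R f1 f2 ⟨hP, hQ, g, hg, hcg⟩ ⟨hQ', hR, h, hh, hch⟩
    refine ⟨hP, hR, h * g, mul_mem hh hg, fun x => ?_⟩
    show ((f2 (f1 x) : ↥R) : G) = _
    rw [hch, hcg]; group
  corestrict_mem := by
    rintro P Q R f ⟨hP, hQ, g, hg, hcg⟩ g' hagree hsurj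
    refine ⟨hP, ?_, g, hg, fun x => by rw [hagree, hcg]⟩
    rintro r hr
    obtain ⟨x, hx⟩ := hsurj ⟨r, hr⟩
    have h1 : r = ((g' x : ↥R) : G) := by rw [hx]
    rw [h1, hagree]
    exact hQ (f x).2
  inv_mem := by
    rintro P Q f ⟨hP, hQ, g, hg, hcg⟩ f' h1 h2
    refine ⟨hQ, hP, g⁻¹, inv_mem hg, fun y => ?_⟩
    have h3 := hcg (f' y)
    rw [h2 y] at h3
    rw [h3]; group

/-- Transport of a subgroup `P ≤ B₁` along an isomorphism `θ : B₁ ≃* B₂` of the bases. -/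
def trIso {S₁ S₂ : Type*} [Group S₁] [Group S₂] {B₁ : Subgroup S₁} {B₂ : Subgroup S₂}
    (θ : ↥B₁ ≃* ↥B₂) (P : Subgroup S₁) : Subgroup S₂ :=
  ((P.subgroupOf B₁).map θ.toMonoidHom).map B₂.subtype

/-- `θ` is an isomorphism of fusion systems `F ≅ F'`: an isomorphism of the underlying
`p`-groups carrying the morphism sets of `F` bijectively onto those of `F'`. -/
def IsFSIso {S₁ S₂ : Type*} [Group S₁] [Group S₂] (F : FusionSystem S₁)
    (F' : FusionSystem S₂) (θ : ↥F.base ≃* ↥F'.base) : Prop :=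
  ∀ (P Q : Subgroup S₁) (hP : P ≤ F.base) (hQ : Q ≤ F.base) (f : ↥P →* ↥Q)
    (f' : ↥(trIso θ P) →* ↥(trIso θ Q)),
    (∀ (x : ↥P) (hm : ((θ ⟨(x : S₁), hP x.2⟩ : ↥F'.base) : S₂) ∈ trIso θ P),
      ((f' ⟨_, hm⟩ : _) : S₂) = ((θ ⟨((f x : ↥Q) : S₁), hQ (f x).2⟩ : ↥F'.base) : S₂)) →
    (f ∈ F.Hom P Q ↔ f' ∈ F'.Hom (trIso θ P) (trIso θ Q))

/-- `E` is a simple fusion system: no proper nontrivial normal subsystem. -/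
def IsSimpleFS (p : ℕ) (E : FusionSystem S) : Prop :=
  E.base ≠ ⊥ ∧ ∀ D : FusionSystem S, IsNormal p D E → D.base = ⊥ ∨ D = E
/-- A centric linking system associated with a fusion system `E`.  Objects are the
`E`-centric subgroups; `δ` is the distinguished functor from the transporter category and
`π` the projection functor to `E`. -/
structure LinkingSystem (E : FusionSystem S) where
  base_centric : E.Centric E.base
  Mor : {P : Subgroup S // E.Centric P} → {P : Subgroup S // E.Centric P} → Type
  comp : ∀ {P Q R}, Mor Q R → Mor P Q → Mor P R
  δ : ∀ (P Q) (g : S), g ∈ E.base → (∀ x ∈ P.1, g * x * g⁻¹ ∈ Q.1) → Mor P Q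
  π : ∀ {P Q}, Mor P Q → (↥P.1 →* ↥Q.1)
  comp_assoc : ∀ {P Q R W} (χ : Mor R W) (ψ : Mor Q R) (φ : Mor P Q),
    comp (comp χ ψ) φ = comp χ (comp ψ φ)
  id_comp : ∀ {P Q} (φ : Mor P Q) (h1 : (1 : S) ∈ E.base)
    (h2 : ∀ x ∈ Q.1, (1 : S) * x * (1 : S)⁻¹ ∈ Q.1), comp (δ Q Q 1 h1 h2) φ = φ
  comp_id : ∀ {P Q} (φ : Mor P Q) (h1 : (1 : S) ∈ E.base)
    (h2 : ∀ x ∈ P.1, (1 : S) * x * (1 : S)⁻¹ ∈ P.1), comp φ (δ P P 1 h1 h2) = φ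
  δ_comp : ∀ {P Q R : {P : Subgroup S // E.Centric P}} (g h : S)
    (hg1 : g ∈ E.base) (hg2 : ∀ x ∈ P.1, g * x * g⁻¹ ∈ Q.1)
    (hh1 : h ∈ E.base) (hh2 : ∀ x ∈ Q.1, h * x * h⁻¹ ∈ R.1)
    (hgh1 : h * g ∈ E.base) (hgh2 : ∀ x ∈ P.1, (h * g) * x * (h * g)⁻¹ ∈ R.1),
    comp (δ Q R h hh1 hh2) (δ P Q g hg1 hg2) = δ P R (h * g) hgh1 hgh2
  π_mem : ∀ {P Q} (ψ : Mor P Q), π ψ ∈ E.Hom P.1 Q.1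
  π_surj : ∀ {P Q : {P : Subgroup S // E.Centric P}} (f : ↥P.1 →* ↥Q.1), f ∈ E.Hom P.1 Q.1 → ∃ ψ : Mor P Q, π ψ = f
  π_comp : ∀ {P Q R} (ψ : Mor Q R) (φ : Mor P Q), π (comp ψ φ) = (π ψ).comp (π φ)
  π_δ : ∀ {P Q : {P : Subgroup S // E.Centric P}} (g : S) (hg : g ∈ E.base) (h : ∀ x ∈ P.1, g * x * g⁻¹ ∈ Q.1) (x : ↥P.1),
    ((π (δ P Q g hg h) x : ↥Q.1) : S) = g * x * g⁻¹
  Z_free : ∀ {P Q : {P : Subgroup S // E.Centric P}} (ψ : Mor P Q) (z : S)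
    (_ : z ∈ P.1 ⊓ Subgroup.centralizer (P.1 : Set S)) (h1 h2),
    comp ψ (δ P P z h1 h2) = ψ → z = 1
  Z_trans : ∀ {P Q} (ψ ψ' : Mor P Q), π ψ = π ψ' →
    ∃ (z : S) (_ : z ∈ P.1 ⊓ Subgroup.centralizer (P.1 : Set S)) (h1 : z ∈ E.base)
      (h2 : ∀ x ∈ P.1, z * x * z⁻¹ ∈ P.1), ψ' = comp ψ (δ P P z h1 h2)
  axC : ∀ {P Q : {P : Subgroup S // E.Centric P}} (ψ : Mor P Q) (g : S) (hgP : g ∈ P.1) (h1 : g ∈ E.base)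
    (h2 : ∀ x ∈ P.1, g * x * g⁻¹ ∈ P.1)
    (h3 : ((π ψ ⟨g, hgP⟩ : ↥Q.1) : S) ∈ E.base)
    (h4 : ∀ x ∈ Q.1, ((π ψ ⟨g, hgP⟩ : ↥Q.1) : S) * x * ((π ψ ⟨g, hgP⟩ : ↥Q.1) : S)⁻¹ ∈ Q.1),
    comp ψ (δ P P g h1 h2) = comp (δ Q Q ((π ψ ⟨g, hgP⟩ : ↥Q.1) : S) h3 h4) ψ

namespace LinkingSystem

variable {E : FusionSystem S} (L : LinkingSystem E)

/-- The object of `L` given by the underlying `p`-group of `E`. -/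
def baseObj : {P : Subgroup S // E.Centric P} := ⟨E.base, L.base_centric⟩

/-- All morphisms of `L`, bundled into a single type. -/
def Mor' := Σ (P Q : {P : Subgroup S // E.Centric P}), L.Mor P Q

/-- The identity morphism of `P` (i.e. `δ_P(1)`). -/
def idMor (P : {P : Subgroup S // E.Centric P}) : L.Mor P P :=
  L.δ P P 1 (one_mem _) (fun x hx => by simpa using hx)

/-- The distinguished "inclusion" `ι_P : P → S`. -/
def ι (P : {P : Subgroup S // E.Centric P}) : L.Mor P L.baseObj :=
  L.δ P L.baseObj 1 (one_mem _) (fun x hx => by show _ ∈ E.base; simpa using P.2.1 hx)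

/-- Composition of bundled morphisms. -/
def scomp : ∀ (m₂ m₁ : L.Mor'), m₁.2.1 = m₂.1 → L.Mor'
  | ⟨Q₂, R, ψ⟩, ⟨P, _, φ⟩, h =>
    ⟨P, R, L.comp (cast (congrArg (fun X => L.Mor X R) h.symm) ψ) φ⟩

/-- The object map induced by a permutation of `Mor'`. -/
def objMap (β : Equiv.Perm L.Mor') (P : {P : Subgroup S // E.Centric P}) :
    {P : Subgroup S // E.Centric P} :=
  (β ⟨P, P, L.idMor P⟩).1

/-- `β` is an isotypical automorphism of `L`: a self-equivalence of the category `L` which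
preserves the inclusions `ι_P` and the distinguished subgroups `[[P]] = δ_P(P)`. -/
def LAutCond (β : Equiv.Perm L.Mor') : Prop :=
  (∀ m : L.Mor', (β m).1 = L.objMap β m.1 ∧ (β m).2.1 = L.objMap β m.2.1) ∧
  (∀ (P Q R) (φ : L.Mor P Q) (ψ : L.Mor Q R)
    (h' : (β ⟨P, Q, φ⟩).2.1 = (β ⟨Q, R, ψ⟩).1),
    β ⟨P, R, L.comp ψ φ⟩ = L.scomp (β ⟨Q, R, ψ⟩) (β ⟨P, Q, φ⟩) h') ∧
  (∀ P, β ⟨P, L.baseObj, L.ι P⟩ = ⟨L.objMap β P, L.baseObj, L.ι (L.objMap β P)⟩) ∧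
  (∀ (P) (g : S) (_ : g ∈ P.1) (h1 : g ∈ E.base) (h2 : ∀ x ∈ P.1, g * x * g⁻¹ ∈ P.1),
    ∃ (g' : S) (_ : g' ∈ (L.objMap β P).1) (h1' : g' ∈ E.base)
      (h2' : ∀ x ∈ (L.objMap β P).1, g' * x * g'⁻¹ ∈ (L.objMap β P).1),
      β ⟨P, P, L.δ P P g h1 h2⟩
        = ⟨L.objMap β P, L.objMap β P, L.δ (L.objMap β P) (L.objMap β P) g' h1' h2'⟩)

theorem objMap_comp {L : LinkingSystem E} {βa βb : Equiv.Perm L.Mor'}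
    (ha : L.LAutCond βa) (hb : L.LAutCond βb) (P : {P : Subgroup S // E.Centric P}) :
    L.objMap (βa * βb) P = L.objMap βa (L.objMap βb P) := by
  obtain ⟨g', hg'P, h1', h2', hβb⟩ := hb.2.2.2 P 1 (one_mem _) (one_mem _)
    (fun x hx => by simpa using hx)
  show (βa (βb ⟨P, P, L.idMor P⟩)).1 = _
  rw [show (⟨P, P, L.idMor P⟩ : L.Mor') = ⟨P, P, L.δ P P 1 (one_mem _)
    (fun x hx => by simpa using hx)⟩ from rfl, hβb]
  exact (ha.1 _).1

theorem scomp_comm {L : LinkingSystem E} {β : Equiv.Perm L.Mor'} (hβ : L.LAutCond β) :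
    ∀ (m₂ m₁ : L.Mor') (h : m₁.2.1 = m₂.1) (h' : (β m₁).2.1 = (β m₂).1),
      β (L.scomp m₂ m₁ h) = L.scomp (β m₂) (β m₁) h' := by
  rintro ⟨Q₂, R, ψ⟩ ⟨P, Q₁, φ⟩ h h'
  have h0 : Q₁ = Q₂ := h
  subst h0
  rw [Subsingleton.elim h rfl]
  exact hβ.2.1 P Q₁ R φ ψ h'

theorem lautCond_one : L.LAutCond 1 := by
  refine ⟨fun m => ⟨rfl, rfl⟩, ?_, fun P => rfl, ?_⟩
  · intro P Q R φ ψ h'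
    show (⟨P, R, L.comp ψ φ⟩ : L.Mor') = L.scomp ⟨Q, R, ψ⟩ ⟨P, Q, φ⟩ h'
    rw [Subsingleton.elim h' rfl]
    rfl
  · intro P g hgP h1 h2
    exact ⟨g, hgP, h1, h2, rfl⟩

theorem lautCond_mul {L : LinkingSystem E} {βa βb : Equiv.Perm L.Mor'}
    (ha : L.LAutCond βa) (hb : L.LAutCond βb) : L.LAutCond (βa * βb) := by
  refine ⟨?_, ?_, ?_, ?_⟩
  · intro m
    constructor
    · show (βa (βb m)).1 = _
      rw [(ha.1 (βb m)).1, (hb.1 m).1, objMap_comp ha hb]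
    · show (βa (βb m)).2.1 = _
      rw [(ha.1 (βb m)).2, (hb.1 m).2, objMap_comp ha hb]
  · intro P Q R φ ψ h'
    show βa (βb ⟨P, R, L.comp ψ φ⟩) = _
    have h1 : (βb ⟨P, Q, φ⟩).2.1 = (βb ⟨Q, R, ψ⟩).1 := by
      exact (hb.1 (⟨P, Q, φ⟩ : L.Mor')).2.trans (hb.1 (⟨Q, R, ψ⟩ : L.Mor')).1.symm
    rw [hb.2.1 P Q R φ ψ h1]
    exact scomp_comm ha _ _ h1 h'
  · intro P
    have hobj := objMap_comp ha hb P
    rw [hobj]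
    show βa (βb ⟨P, L.baseObj, L.ι P⟩) = _
    rw [hb.2.2.1 P, ha.2.2.1 (L.objMap βb P)]
  · intro P g hgP h1 h2
    have hobj := objMap_comp ha hb P
    rw [hobj]
    obtain ⟨g', hg'P, h1', h2', hβb⟩ := hb.2.2.2 P g hgP h1 h2
    obtain ⟨g'', hg''P, h1'', h2'', hβa⟩ := ha.2.2.2 (L.objMap βb P) g' hg'P h1' h2'
    refine ⟨g'', hg''P, h1'', h2'', ?_⟩
    show βa (βb ⟨P, P, L.δ P P g h1 h2⟩) = _
    rw [hβb, hβa]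

/-- `Aut^I_typ(L)`: the group of isotypical automorphisms of `L`. -/
def LAutI : Subgroup (Equiv.Perm L.Mor') where
  carrier := {β | L.LAutCond β ∧ L.LAutCond β⁻¹}
  one_mem' := ⟨L.lautCond_one, by rw [inv_one]; exact L.lautCond_one⟩
  mul_mem' h1 h2 := ⟨lautCond_mul h1.1 h2.1, by
    rw [mul_inv_rev]; exact lautCond_mul h2.2 h1.2⟩
  inv_mem' h := ⟨h.2, by rw [inv_inv]; exact h.1⟩

/-- `β` is conjugation by an element `γ ∈ Aut_L(S)` (an "inner" automorphism of `L`);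
the quotient of `Aut^I_typ(L)` by these is `Out_typ(L)`. -/
def InnCond (β : Equiv.Perm L.Mor') : Prop :=
  ∃ (γ : L.Mor L.baseObj L.baseObj) (γ' : L.Mor L.baseObj L.baseObj)
    (r : ∀ P : {P : Subgroup S // E.Centric P}, Σ P', L.Mor P P'),
    L.comp γ γ' = L.idMor L.baseObj ∧ L.comp γ' γ = L.idMor L.baseObj ∧
    (∀ P, L.comp (L.ι (r P).1) (r P).2 = L.comp γ (L.ι P)) ∧
    (∀ (P Q : {P : Subgroup S // E.Centric P}) (ψ : L.Mor P Q),
      (r P).1 = (β ⟨P, Q, ψ⟩).1) ∧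
    (∀ (P Q) (ψ : L.Mor P Q) (h : (r P).1 = (β ⟨P, Q, ψ⟩).1),
      L.scomp (β ⟨P, Q, ψ⟩) ⟨P, (r P).1, (r P).2⟩ h = ⟨P, (r Q).1, L.comp (r Q).2 ψ⟩)

end LinkingSystem
/-- `F` is tamely realized by the finite group `G`: `F ≅ F_{S'}(G)` for a Sylow `p`-subgroup
`S'` of `G`, and the natural map `κ_G : Out(G) → Out_typ(L^c_{S'}(G))` is split surjective.
Here the linking system is encoded by an associated abstract centric linking system `L`
together with the natural action `κ` of the `S'`-normalizing automorphisms of `G` on it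
(compatible with the structure maps `δ` and `π`), and split surjectivity of `κ_G` is
expressed by a subgroup `H` of `Aut(G)` normalizing `S'` which maps onto `Out_typ(L)`
bijectively modulo inner automorphisms. -/
def TamelyRealizedBy (p : ℕ) (F : FusionSystem S) (G : Type) [Group G] [Finite G] : Prop :=
  ∃ (S' : Subgroup G) (θ : ↥F.base ≃* ↥(groupFS G ⊤ S' le_top).base),
    IsPGroup p ↥S' ∧ ¬ (p ∣ S'.index) ∧ IsFSIso F (groupFS G ⊤ S' le_top) θ ∧
    ∃ (L : LinkingSystem (groupFS G ⊤ S' le_top))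
      (κ : ∀ α : MulAut G, S'.map α.toMonoidHom = S' → Equiv.Perm L.Mor'),
      (∀ (α : MulAut G) (hα : S'.map α.toMonoidHom = S'), κ α hα ∈ L.LAutI) ∧
      (∀ (α β : MulAut G) (hα : S'.map α.toMonoidHom = S')
        (hβ : S'.map β.toMonoidHom = S') (hαβ : S'.map (α * β).toMonoidHom = S'),
        κ (α * β) hαβ = κ α hα * κ β hβ) ∧
      (∀ (α : MulAut G) (hα : S'.map α.toMonoidHom = S')
        (P : {P : Subgroup G // (groupFS G ⊤ S' le_top).Centric P}),
        ((L.objMap (κ α hα) P).1 : Subgroup G) = P.1.map α.toMonoidHom) ∧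
      (∀ (α : MulAut G) (hα : S'.map α.toMonoidHom = S') (P Q) (ψ : L.Mor P Q)
        (P' Q') (ψ' : L.Mor P' Q'), κ α hα ⟨P, Q, ψ⟩ = ⟨P', Q', ψ'⟩ →
        ∀ (x : G) (hx : x ∈ P.1) (hαx : α x ∈ P'.1),
          ((L.π ψ' ⟨α x, hαx⟩ : _) : G) = α ((L.π ψ ⟨x, hx⟩ : _) : G)) ∧
      (∀ (α : MulAut G) (hα : S'.map α.toMonoidHom = S') (P Q) (g : G)
        (hg1 : g ∈ (groupFS G ⊤ S' le_top).base) (hg2 : ∀ x ∈ P.1, g * x * g⁻¹ ∈ Q.1),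
        ∃ (h1' : (α g : G) ∈ (groupFS G ⊤ S' le_top).base)
          (h2' : ∀ x ∈ (L.objMap (κ α hα) P).1,
            (α g : G) * x * (α g : G)⁻¹ ∈ (L.objMap (κ α hα) Q).1),
          κ α hα ⟨P, Q, L.δ P Q g hg1 hg2⟩
            = ⟨L.objMap (κ α hα) P, L.objMap (κ α hα) Q,
               L.δ (L.objMap (κ α hα) P) (L.objMap (κ α hα) Q) (α g) h1' h2'⟩) ∧
      (∀ (α : MulAut G) (hα : S'.map α.toMonoidHom = S'),
        (∃ g : G, ∀ x : G, α x = g * x * g⁻¹) → L.InnCond (κ α hα)) ∧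
      ∃ H : Subgroup (MulAut G),
        ∃ hHS : ∀ α ∈ H, S'.map α.toMonoidHom = S',
        (∀ β ∈ L.LAutI, ∃ (α : MulAut G) (hα : α ∈ H),
          L.InnCond ((κ α (hHS α hα))⁻¹ * β)) ∧
        (∀ (α : MulAut G) (hα : α ∈ H), L.InnCond (κ α (hHS α hα)) →
          ∃ g : G, ∀ x : G, α x = g * x * g⁻¹)

/-- `F` is tame: it is tamely realized by some finite group. -/
def TameFS (p : ℕ) (F : FusionSystem S) : Prop :=
  ∃ (G : Type) (gi : Group G) (fi : Finite G), @TamelyRealizedBy S _ p F G gi fi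

/-!
For `R ≤ T` fully automized in `E`, `Aut_E(R) = O^p(Aut_E(R)) Aut_T(R)`, and both factors lie in
`Aut_{F₀}(R)`: the first because `O^p(Aut_E(R)) ≤ O^p(Aut_F(R))` and `F₀` has `p`-power index, the
second because `T ≤ U`. An arbitrary `E`-morphism `φ : P → Q` is then shown to lie in `F₀` by
downward induction on `|P|`: map `P` and `φ(P)` isomorphically onto a fully automized receptive `R`.
After composing with a suitable element of `Aut_E(R)`, chosen by Sylow's theorem, each of these
isomorphisms extends by receptivity to a strictly larger subgroup, hence lies in `F₀` by induction,
and `φ` is recovered from them and an element of `Aut_E(R) ≤ Aut_{F₀}(R)`.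
-/

section GroupTheory

variable {G : Type*} [Group G] {p : ℕ}

theorem pResidual_normal_and_index_eq_pow [Finite G] (hp : p.Prime) :
    (pResidual p G).Normal ∧ ∃ n : ℕ, (pResidual p G).index = p ^ n := by
  refine InfClosed.biInf_mem (s := {N : Subgroup G | N.Normal ∧ ∃ n : ℕ, N.index = p ^ n}) ?_
    (Set.toFinite _) ⟨inferInstance, 0, by simp⟩ fun N hN => hN
  rintro A ⟨hA, a, ha⟩ B ⟨hB, b, hb⟩
  refine ⟨normal_inf_normal A B, ?_⟩
  have hdvd : (A ⊓ B).index ∣ p ^ (b + a) := by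
    rw [inf_comm, ← relIndex_top_right, ← relIndex_inf_mul_relIndex B A ⊤, inf_top_eq,
      relIndex_top_right, pow_add, ← ha, ← hb]
    exact mul_dvd_mul_right (relIndex_dvd_index_of_normal B A) _
  obtain ⟨n, -, hn⟩ := (Nat.dvd_prime_pow hp).1 hdvd
  exact ⟨n, hn⟩

theorem subResidual_mono [Finite G] (hp : p.Prime) {H K : Subgroup G} (hHK : H ≤ K) :
    subResidual p H ≤ subResidual p K := by
  obtain ⟨hnorm, n, hn⟩ := pResidual_normal_and_index_eq_pow (G := K) hp
  have hidx : ∃ m, ((pResidual p K).comap (inclusion hHK)).index = p ^ m := by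
    rw [index_comap]
    obtain ⟨m, -, hm⟩ := (Nat.dvd_prime_pow hp).1 (hn ▸ relIndex_dvd_index_of_normal _ _)
    exact ⟨m, hm⟩
  have hle : pResidual p H ≤ (pResidual p K).comap (inclusion hHK) :=
    (iInf_le _ _).trans (iInf_le _ ⟨hnorm.comap _, hidx⟩)
  rintro _ ⟨x, hx, rfl⟩
  exact ⟨inclusion hHK x, hle hx, rfl⟩

theorem sup_eq_top_of_index_eq_pow_of_not_dvd_index (hp : p.Prime) {N P : Subgroup G} {n : ℕ}
    (hN : N.index = p ^ n) (hP : ¬ p ∣ P.index) : N ⊔ P = ⊤ := by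
  have hdvd : (N ⊔ P).index ∣ p ^ n := hN ▸ index_dvd_of_le le_sup_left
  obtain ⟨k, -, hk⟩ := (Nat.dvd_prime_pow hp).1 hdvd
  rcases k.eq_zero_or_pos with rfl | hk0
  · exact index_eq_one.1 (by simpa using hk)
  · exact absurd ((hk ▸ dvd_pow_self p hk0.ne').trans (index_dvd_of_le le_sup_right)) hP

theorem le_of_isSylowIn_of_subResidual_le [Finite G] (hp : p.Prime) {A B K P : Subgroup G}
    (hAB : A ≤ B) (hP : IsSylowIn p P A) (hBK : subResidual p B ≤ K) (hPK : P ≤ K) : A ≤ K := by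
  obtain ⟨-, n, hn⟩ := pResidual_normal_and_index_eq_pow (G := A) hp
  have hsup := sup_eq_top_of_index_eq_pow_of_not_dvd_index hp hn (P := P.subgroupOf A) hP.2.2
  intro a ha
  have hmem : a ∈ (pResidual p A ⊔ P.subgroupOf A).map A.subtype :=
    ⟨⟨a, ha⟩, hsup ▸ mem_top _, rfl⟩
  rw [Subgroup.map_sup, subgroupOf_map_subtype] at hmem
  exact sup_le ((subResidual_mono hp hAB).trans hBK) (inf_le_left.trans hPK) hmem

open scoped Pointwise in
theorem IsSylowIn.exists_conj_mem [Fact p.Prime] [Finite G] {P A D : Subgroup G}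
    (hP : IsSylowIn p P A) (hDA : D ≤ A) (hD : IsPGroup p D) :
    ∃ γ ∈ A, ∀ d ∈ D, γ * d * γ⁻¹ ∈ P := by
  have hP' : IsPGroup p (P.subgroupOf A) := hP.2.1.comap_of_injective _ Subtype.coe_injective
  let Psyl : Sylow p A := hP'.toSylow hP.2.2
  obtain ⟨Q, hDQ⟩ := (hD.comap_of_injective _ Subtype.coe_injective :
    IsPGroup p (D.subgroupOf A)).exists_le_sylow
  obtain ⟨γ, hγ⟩ := MulAction.exists_smul_eq A Q Psyl
  refine ⟨γ, γ.2, fun d hd => ?_⟩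
  have h := smul_mem_pointwise_smul ⟨d, hDA hd⟩ (MulAut.conj γ) (Q : Subgroup A) (hDQ hd)
  rw [show MulAut.conj γ • (Q : Subgroup A) = (γ • Q : Sylow p A) by
    rw [Sylow.smul_def, Sylow.pointwise_smul_def], hγ] at h
  rw [MulAut.smul_def, MulAut.conj_apply] at h
  exact mem_subgroupOf.1 h

theorem IsPGroup.exists_mem_normalizer_notMem_of_lt [Fact p.Prime] [Finite G] {P T : Subgroup G}
    (hT : IsPGroup p T) (hPT : P < T) :
    ∃ t ∈ T, t ∈ normalizer (P : Set G) ∧ t ∉ P := by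
  have : Group.IsNilpotent T := hT.isNilpotent
  have hlt : P.subgroupOf T < ⊤ :=
    lt_top_iff_ne_top.2 fun h => hPT.not_ge (subgroupOf_eq_top.1 h)
  obtain ⟨t, ht, htP⟩ := SetLike.exists_of_lt (Group.normalizerCondition_of_isNilpotent _ hlt)
  rw [← subgroupOf_normalizer_eq hPT.le, mem_subgroupOf] at ht
  exact ⟨t, t.2, ht, fun h => htP (mem_subgroupOf.2 h)⟩

end GroupTheory

theorem autConj_pow_apply {P : Subgroup S} {α : MulAut P} {g : S}
    (hα : ∀ x : P, (α x : S) = g * x * g⁻¹) (n : ℕ) (x : P) :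
    ((α ^ n) x : S) = g ^ n * x * (g ^ n)⁻¹ := by
  induction n generalizing x with
  | zero => simp
  | succ n ih => rw [pow_succ, MulAut.mul_apply, ih, hα]; group

theorem isPGroup_autConj {p : ℕ} {U : Subgroup S} (hU : IsPGroup p U) (P : Subgroup S) :
    IsPGroup p (AutConj U P) := by
  rintro ⟨α, g, hg, hα⟩
  obtain ⟨k, hk⟩ := hU ⟨g, hg⟩
  have hgk : g ^ p ^ k = 1 := congrArg Subtype.val hk
  refine ⟨k, Subtype.ext (MulEquiv.ext fun x => Subtype.ext ?_)⟩
  change ((α ^ p ^ k) x : S) = x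
  rw [autConj_pow_apply hα, hgk]
  group

theorem IsSub.autF_le {E F : FusionSystem S} (h : IsSub E F) (R : Subgroup S) :
    E.AutF R ≤ F.AutF R
  | _, Or.inl hα => Or.inl (h.hom_le R R hα)
  | _, Or.inr hα => Or.inr hα

namespace FusionSystem

variable {F : FusionSystem S} {P Q R : Subgroup S}

theorem mem_hom_of_coe_eq {f : P →* Q} (hf : f ∈ F.Hom P Q) {g : P →* R}
    (hgf : ∀ x, (g x : S) = f x) (hR : R ≤ F.base) : g ∈ F.Hom P R := by
  let I : Subgroup S := g.range.map R.subtype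
  have hgI : (R.subtype.comp g).codRestrict I (fun x => ⟨g x, ⟨x, rfl⟩, rfl⟩) ∈ F.Hom P I := by
    refine F.corestrict_mem hf _ hgf ?_
    rintro ⟨_, _, ⟨x, rfl⟩, rfl⟩
    exact ⟨x, rfl⟩
  exact F.homRestrict_mem hgI le_rfl (map_subtype_le _) hR

theorem IsConjF.exists_mulEquiv (h : F.IsConjF P Q) :
    ∃ e : P ≃* Q, e.toMonoidHom ∈ F.Hom P Q := by
  obtain ⟨φ, hφ, hs⟩ := h
  exact ⟨MulEquiv.ofBijective φ ⟨F.inj hφ, hs⟩, hφ⟩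

theorem exists_mulEquiv_image {f : P →* Q} (hf : f ∈ F.Hom P Q) :
    ∃ (P' : Subgroup S) (e : P ≃* P'), e.toMonoidHom ∈ F.Hom P P' ∧ ∀ x, (e x : S) = f x := by
  let f' := (Q.subtype.comp f).codRestrict (f.range.map Q.subtype) fun x => ⟨f x, ⟨x, rfl⟩, rfl⟩
  have hs : Function.Surjective f' := by
    rintro ⟨_, _, ⟨x, rfl⟩, rfl⟩
    exact ⟨x, rfl⟩
  have hf' : f' ∈ F.Hom P _ := F.corestrict_mem hf f' (fun _ => rfl) hs
  exact ⟨_, MulEquiv.ofBijective f' ⟨F.inj hf', hs⟩, hf', fun _ => rfl⟩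

theorem symm_mem {e : P ≃* Q} (he : e.toMonoidHom ∈ F.Hom P Q) :
    e.symm.toMonoidHom ∈ F.Hom Q P :=
  F.inv_mem he _ e.symm_apply_apply e.apply_symm_apply

theorem trans_mem {e₁ : P ≃* Q} {e₂ : Q ≃* R} (h₁ : e₁.toMonoidHom ∈ F.Hom P Q)
    (h₂ : e₂.toMonoidHom ∈ F.Hom Q R) : (e₁.trans e₂).toMonoidHom ∈ F.Hom P R :=
  F.comp_mem h₁ h₂

theorem toMonoidHom_mem_of_mem_autF (hR : R ≤ F.base) {α : MulAut R} (hα : α ∈ F.AutF R) :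
    α.toMonoidHom ∈ F.Hom R R := by
  rcases hα with h | h
  · exact h
  · rw [Set.mem_singleton_iff.1 h]
    exact F.conj_mem 1 (one_mem _) hR hR _ fun x => by simp

theorem autConj_le_autF {U : Subgroup S} (hU : U ≤ F.base) (hR : R ≤ F.base) :
    AutConj U R ≤ F.AutF R :=
  fun _ ⟨g, hg, hα⟩ => Or.inl (F.conj_mem g (hU hg) hR hR _ hα)

variable {p : ℕ} [Fact p.Prime] [Finite S]

theorem autF_le_autF_of_fullyAutomized {E F F₀ : FusionSystem S} (hEF : IsSub E F)
    (hTU : E.base ≤ F₀.base) (hR : R ≤ E.base) (hFA : E.FullyAutomized p R)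
    (hppi : subResidual p (F.AutF R) ≤ F₀.AutF R) : E.AutF R ≤ F₀.AutF R :=
  le_of_isSylowIn_of_subResidual_le Fact.out (hEF.autF_le R) hFA hppi
    (autConj_le_autF hTU (hR.trans hTU))

/-- Sylow's theorem in `Aut_E(R)` conjugates `χ Aut_T(P) χ⁻¹` into `Aut_T(R)`. -/
theorem exists_autF_inf_normalizer_le_nPhi {E : FusionSystem S} (hT : IsPGroup p E.base)
    (χ : P ≃* R) (hχ : χ.toMonoidHom ∈ E.Hom P R) (hFA : E.FullyAutomized p R) :
    ∃ γ ∈ E.AutF R, E.base ⊓ normalizer (P : Set S) ≤ E.NPhi (χ.trans γ).toMonoidHom := by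
  have hP := (E.mem_le hχ).1
  have hR := (E.mem_le hχ).2
  let D : Subgroup (MulAut R) := (AutConj E.base P).map (MulAut.congr χ).toMonoidHom
  have hDE : D ≤ E.AutF R := by
    rintro _ ⟨c, hc, rfl⟩
    exact Or.inl (trans_mem (symm_mem hχ)
      (trans_mem (toMonoidHom_mem_of_mem_autF hP (autConj_le_autF le_rfl hP hc)) hχ))
  obtain ⟨γ, hγ, hconj⟩ := hFA.exists_conj_mem hDE ((isPGroup_autConj hT P).map _)
  refine ⟨γ, hγ, fun t ht => ⟨ht.1, ht.2, ?_⟩⟩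
  let c : MulAut P := P.normalizerMonoidHom ⟨t, ht.2⟩
  obtain ⟨h, hh, hch⟩ := hconj _ ⟨c, ⟨t, ht.1, fun _ => rfl⟩, rfl⟩
  refine ⟨h, hh, fun x hx htx => ?_⟩
  rw [← hch]
  simp only [MulEquiv.coe_toMonoidHom, MulAut.mul_apply, MulAut.congr_apply,
    MulEquiv.trans_apply, MulAut.inv_apply_self, MulEquiv.symm_apply_apply]
  rfl

/-- For `P < T`, receptivity extends `γ ∘ χ` to `N_{γχ} > P`, where it lies in `F₀` by induction. -/
theorem exists_autF_trans_mem {E F₀ : FusionSystem S} (hT : IsPGroup p E.base)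
    (hTU : E.base ≤ F₀.base) (χ : P ≃* R) (hχ : χ.toMonoidHom ∈ E.Hom P R)
    (hFA : E.FullyAutomized p R) (hrec : E.Receptive R)
    (IH : ∀ P₁ Q₁ : Subgroup S, Nat.card P < Nat.card P₁ → E.Hom P₁ Q₁ ⊆ F₀.Hom P₁ Q₁) :
    ∃ γ ∈ E.AutF R, (χ.trans γ).toMonoidHom ∈ F₀.Hom P R := by
  have hP := (E.mem_le hχ).1
  have hR := (E.mem_le hχ).2
  rcases hP.lt_or_eq with hlt | rfl
  · obtain ⟨γ, hγ, hN⟩ := exists_autF_inf_normalizer_le_nPhi hT χ hχ hFA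
    let ψ := (χ.trans γ).toMonoidHom
    have hψ : ψ ∈ E.Hom P R := trans_mem hχ (toMonoidHom_mem_of_mem_autF hR hγ)
    obtain ⟨Ψ, hΨ, hΨψ⟩ := hrec P ψ hψ (χ.trans γ).surjective
    have hPN : P ≤ E.NPhi ψ := fun x hx => hN ⟨hP hx, le_normalizer hx⟩
    obtain ⟨t, htT, htN, htP⟩ := hT.exists_mem_normalizer_notMem_of_lt hlt
    have hcard : Nat.card P < Nat.card (E.NPhi ψ) := by
      refine (card_le_of_le hPN).lt_of_ne fun h => htP ?_
      rw [eq_of_le_of_card_ge hPN h.ge]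
      exact hN ⟨htT, htN⟩
    exact ⟨γ, hγ, mem_hom_of_coe_eq (F₀.homRestrict_mem (IH _ _ hcard hΨ) hPN le_rfl hTU)
      (fun x => (hΨψ ⟨x, hPN x.2⟩ x.2).symm) (hR.trans hTU)⟩
  · obtain rfl : R = E.base := eq_of_le_of_card_ge hR (Nat.card_congr χ.toEquiv).le
    refine ⟨χ.symm, Or.inl (symm_mem hχ), F₀.conj_mem 1 (one_mem _) hTU hTU _ fun x => ?_⟩
    simp

theorem hom_subset_of_autF_le {E F₀ : FusionSystem S} (hT : IsPGroup p E.base)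
    (hE : E.Saturated p) (hTU : E.base ≤ F₀.base)
    (hAut : ∀ R ≤ E.base, E.FullyAutomized p R → E.AutF R ≤ F₀.AutF R) (P Q : Subgroup S) :
    E.Hom P Q ⊆ F₀.Hom P Q := by
  suffices ∀ n (P Q : Subgroup S), Nat.card E.base - Nat.card P = n → E.Hom P Q ⊆ F₀.Hom P Q from
    this _ P Q rfl
  intro n
  induction n using Nat.strong_induction_on with
  | _ n ih =>
  rintro P Q rfl φ hφ
  have IH : ∀ P₁ Q₁ : Subgroup S, Nat.card P < Nat.card P₁ → E.Hom P₁ Q₁ ⊆ F₀.Hom P₁ Q₁ := by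
    intro P₁ Q₁ hlt φ₁ hφ₁
    have := card_le_of_le (E.mem_le hφ₁).1
    exact ih _ (by omega) P₁ Q₁ rfl hφ₁
  obtain ⟨R, hPR, hFA, hrec⟩ := hE P (E.mem_le hφ).1
  obtain ⟨σ, hσ⟩ := hPR.exists_mulEquiv
  have hR := (E.mem_le hσ).2
  obtain ⟨P', e, he, heφ⟩ := exists_mulEquiv_image hφ
  obtain ⟨γ₁, hγ₁, h₁⟩ := exists_autF_trans_mem hT hTU σ hσ hFA hrec IH
  obtain ⟨γ₂, hγ₂, h₂⟩ := exists_autF_trans_mem hT hTU (e.symm.trans σ)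
    (trans_mem (symm_mem he) hσ) hFA hrec
    fun P₁ Q₁ h => IH P₁ Q₁ (by rwa [Nat.card_congr e.toEquiv])
  have hδ : (γ₂ * γ₁⁻¹).toMonoidHom ∈ F₀.Hom R R := toMonoidHom_mem_of_mem_autF (hR.trans hTU)
    (hAut R hR hFA (mul_mem hγ₂ ((E.AutF R).inv_mem hγ₁)))
  refine mem_hom_of_coe_eq (trans_mem h₁ (trans_mem hδ (symm_mem h₂))) (fun x => ?_)
    ((E.mem_le hφ).2.trans hTU)
  rw [← heφ]
  simp

end FusionSystem

theorem normal_le_pPowerIndex_subsystem_general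
    (p : ℕ) [Fact p.Prime] {S : Type*} [Group S] [Finite S] (hS : IsPGroup p S)
    (F E F₀ : FusionSystem S)
    (hN : IsNormal p E F)
    (hppi : HasPPowerIndex p F₀ F)
    (hU : E.base ⊔ F.hyp p ≤ F₀.base) :
    IsSub E F₀ := by
  have hTU : E.base ≤ F₀.base := le_sup_left.trans hU
  refine ⟨hTU, FusionSystem.hom_subset_of_autF_le (hS.to_subgroup _) hN.sat hTU ?_⟩
  exact fun R hR hFA =>
    FusionSystem.autF_le_autF_of_fullyAutomized hN.sub hTU hR hFA (hppi.2.2 R (hR.trans hTU))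

/-- Proposition `O^p(F)`, second part.
If `E ⊴ F` is a normal subsystem over a strongly closed `T ⊴ S` and `F₀ ⊴ F` is a normal
subsystem of `p`-power index over `U ≥ T·hyp(F)`, then `E ≤ F₀`. -/
theorem normal_le_pPowerIndex_subsystem
    (p : ℕ) [Fact p.Prime] {S : Type*} [Group S] [Finite S] (hS : IsPGroup p S)
    (F E F₀ : FusionSystem S) (hF : F.base = ⊤) (hT : (E.base).Normal)
    (hFsat : F.Saturated p) (hN : IsNormal p E F)
    (hN₀ : IsNormal p F₀ F) (hppi : HasPPowerIndex p F₀ F)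
    (hU : E.base ⊔ F.hyp p ≤ F₀.base) :
    IsSub E F₀ :=
  normal_le_pPowerIndex_subsystem_general p hS F E F₀ hN hppi hU
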